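/- arXiv:2602.03481 — 2 statements merged into one kernel-verified Lean document; each statement's English description precedes it below -/
import Mathlib

section
/- Let Ω = (0,X) and let y ∈ H¹(Ω) with y(0) = y(X) = 0 (case m = 1). Then ∫_Ω y² dx = −∫_Ω (Dy)·(I⟨1⟩y) dx, where I⟨1⟩y = Iy − ⟨Iy⟩_Ω. Consequently ‖y‖_{L²(Ω)} ≤ C‖y‖_{H¹(Ω)}^{1/2}·‖I⟨1⟩y‖_{L²(Ω)}^{1/2}. -/
open MeasureTheory Set

lemma cs_integral {μ : Measure ℝ} {f g : ℝ → ℝ}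
    (hf : AEStronglyMeasurable f μ) (hg : AEStronglyMeasurable g μ)
    (hf2 : Integrable (fun x => f x ^ 2) μ) (hg2 : Integrable (fun x => g x ^ 2) μ) :
    |∫ x, f x * g x ∂μ| ≤ Real.sqrt (∫ x, f x ^ 2 ∂μ) * Real.sqrt (∫ x, g x ^ 2 ∂μ) := by
  have hpq : Real.HolderConjugate 2 2 := Real.HolderConjugate.two_two
  have hmf : MemLp f 2 μ := (memLp_two_iff_integrable_sq hf).2 hf2
  have hmg : MemLp g 2 μ := (memLp_two_iff_integrable_sq hg).2 hg2
  have h2 : ENNReal.ofReal (2:ℝ) = 2 := by norm_num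
  have h := integral_mul_norm_le_Lp_mul_Lq hpq (h2 ▸ hmf) (h2 ▸ hmg)
  have hrw : ∀ (h : ℝ → ℝ), (∫ x, ‖h x‖ ^ (2:ℝ) ∂μ) = ∫ x, h x ^ 2 ∂μ := by
    intro h
    refine integral_congr_ae (Filter.Eventually.of_forall fun x => ?_)
    show ‖h x‖ ^ (2:ℝ) = h x ^ 2
    rw [show ((2:ℝ)) = ((2:ℕ):ℝ) by norm_num, Real.rpow_natCast, Real.norm_eq_abs, sq_abs]
  rw [hrw f, hrw g] at h
  calc |∫ x, f x * g x ∂μ| ≤ ∫ x, ‖f x * g x‖ ∂μ := by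
        simpa using norm_integral_le_integral_norm (fun x => f x * g x) (μ := μ)
    _ = ∫ x, ‖f x‖ * ‖g x‖ ∂μ := by simp [norm_mul]
    _ ≤ (∫ x, f x ^ 2 ∂μ) ^ ((1:ℝ)/2) * (∫ x, g x ^ 2 ∂μ) ^ ((1:ℝ)/2) := h
    _ = Real.sqrt (∫ x, f x ^ 2 ∂μ) * Real.sqrt (∫ x, g x ^ 2 ∂μ) := by
        rw [Real.sqrt_eq_rpow, Real.sqrt_eq_rpow]

lemma stmt7_aux (X : ℝ) (hX : 0 < X) (y Dy G : ℝ → ℝ)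
    (hder : ∀ x ∈ Icc (0:ℝ) X, HasDerivAt y (Dy x) x)
    (hy0 : y 0 = 0) (hyX : y X = 0)
    (hy2 : IntegrableOn (fun x => (y x)^2) (Icc 0 X))
    (hDy2 : IntegrableOn (fun x => (Dy x)^2) (Icc 0 X))
    (hGcont : ContinuousOn G (Icc 0 X))
    (hGderiv : ∀ x ∈ Ioo (0:ℝ) X, HasDerivAt G (y x) x) :
    ((∫ x in (0:ℝ)..X, (y x)^2) = - ∫ x in (0:ℝ)..X, Dy x * G x) ∧
    Real.sqrt (∫ x in (0:ℝ)..X, (y x)^2)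
      ≤ Real.sqrt
          ((Real.sqrt (∫ x in (0:ℝ)..X, (y x)^2)
            + Real.sqrt (∫ x in (0:ℝ)..X, (Dy x)^2)) *
           Real.sqrt (∫ x in (0:ℝ)..X, (G x)^2)) := by
  have hyc : ContinuousOn y (Icc 0 X) := fun x hx =>
    (hder x hx).continuousAt.continuousWithinAt
  have huIcc : uIcc (0:ℝ) X = Icc 0 X := uIcc_of_le hX.le
  -- measurability and integrability of Dy
  have hDm : AEStronglyMeasurable Dy (volume.restrict (Icc 0 X)) := by
    refine (measurable_deriv y).aestronglyMeasurable.restrict.congr ?_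
    exact ae_restrict_of_forall_mem measurableSet_Icc fun x hx => (hder x hx).deriv
  haveI : IsFiniteMeasure (volume.restrict (Icc (0:ℝ) X)) :=
    ⟨by rw [Measure.restrict_apply_univ]; exact measure_Icc_lt_top⟩
  have hDyInt : IntegrableOn Dy (Icc 0 X) :=
    ((memLp_two_iff_integrable_sq hDm).2 hDy2).integrable (by norm_num)
  -- bound for G
  obtain ⟨M, hM⟩ := isCompact_Icc.exists_bound_of_continuousOn hGcont
  have hGm : AEStronglyMeasurable G (volume.restrict (Icc 0 X)) :=
    hGcont.aestronglyMeasurable measurableSet_Icc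
  have hprod : IntegrableOn (fun x => Dy x * G x) (Icc 0 X) := by
    refine Integrable.mono' (hDyInt.norm.mul_const M) (hDm.mul hGm) ?_
    refine ae_restrict_of_forall_mem measurableSet_Icc fun x hx => ?_
    rw [norm_mul]
    exact mul_le_mul_of_nonneg_left (hM x hx) (norm_nonneg _)
  have hysq : IntegrableOn (fun x => y x * y x) (Icc 0 X) := by
    simpa [sq] using hy2
  -- integration by parts
  rw [← huIcc] at hprod hysq
  have hsum : IntegrableOn (fun x => Dy x * G x + y x * y x) (uIcc 0 X) :=
    hprod.add hysq
  have hsumII : IntervalIntegrable (fun x => Dy x * G x + y x * y x) volume 0 X :=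
    hsum.intervalIntegrable
  have hparts : (∫ x in (0:ℝ)..X, (Dy x * G x + y x * y x)) = 0 := by
    have h : (∫ x in (0:ℝ)..X, (Dy x * G x + y x * y x))
        = y X * G X - y 0 * G 0 := intervalIntegral.integral_eq_sub_of_hasDeriv_right_of_le hX.le
      ((hyc.mul hGcont))
      (fun x hx => (((hder x ⟨hx.1.le, hx.2.le⟩).mul (hGderiv x hx)).hasDerivWithinAt))
      hsumII
    rw [h, hy0, hyX]; ring
  have hprodII : IntervalIntegrable (fun x => Dy x * G x) volume 0 X :=
    hprod.intervalIntegrable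
  have hysqII : IntervalIntegrable (fun x => y x * y x) volume 0 X :=
    hysq.intervalIntegrable
  rw [intervalIntegral.integral_add hprodII hysqII] at hparts
  have key : (∫ x in (0:ℝ)..X, (y x)^2) = - ∫ x in (0:ℝ)..X, Dy x * G x := by
    have h2 : (∫ x in (0:ℝ)..X, (y x)^2) = ∫ x in (0:ℝ)..X, y x * y x := by
      simp [sq]
    rw [h2]; linarith
  refine ⟨key, ?_⟩
  -- Cauchy–Schwarz
  have hIoc : Ioc (0:ℝ) X ⊆ Icc 0 X := Ioc_subset_Icc_self
  have hcs : |∫ x in Ioc (0:ℝ) X, Dy x * G x|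
      ≤ Real.sqrt (∫ x in Ioc (0:ℝ) X, Dy x ^ 2)
        * Real.sqrt (∫ x in Ioc (0:ℝ) X, G x ^ 2) := by
    refine cs_integral (hDm.mono_measure (Measure.restrict_mono hIoc le_rfl))
      (hGm.mono_measure (Measure.restrict_mono hIoc le_rfl))
      (hDy2.mono_set hIoc) ?_
    exact ((hGcont.pow 2).integrableOn_compact isCompact_Icc).mono_set hIoc
  have hA : (∫ x in (0:ℝ)..X, (y x)^2)
      ≤ Real.sqrt (∫ x in (0:ℝ)..X, (Dy x)^2) * Real.sqrt (∫ x in (0:ℝ)..X, (G x)^2) := by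
    rw [key]
    calc - ∫ x in (0:ℝ)..X, Dy x * G x ≤ |∫ x in (0:ℝ)..X, Dy x * G x| := neg_le_abs _
      _ = |∫ x in Ioc (0:ℝ) X, Dy x * G x| := by
          rw [intervalIntegral.integral_of_le hX.le]
      _ ≤ _ := by
          rw [intervalIntegral.integral_of_le hX.le, intervalIntegral.integral_of_le hX.le]
          exact hcs
  refine Real.sqrt_le_sqrt ?_
  refine hA.trans (mul_le_mul_of_nonneg_right ?_ (Real.sqrt_nonneg _))
  exact le_add_of_nonneg_left (Real.sqrt_nonneg _)

/-- For y ∈ H¹(0,X) with y(0)=y(X)=0: ∫ y² = −∫ (Dy)(I⟨1⟩y) and the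
multiplicative bound ‖y‖₂ ≤ C‖y‖_{H¹}^{1/2}‖I⟨1⟩y‖₂^{1/2}. -/
theorem stmt7 (X : ℝ) (hX : 0 < X) :
    ∃ C > 0, ∀ (y Dy : ℝ → ℝ),
      (∀ x ∈ Icc (0:ℝ) X, HasDerivAt y (Dy x) x) →
      y 0 = 0 → y X = 0 →
      IntegrableOn (fun x => (y x)^2) (Icc 0 X) →
      IntegrableOn (fun x => (Dy x)^2) (Icc 0 X) →
      ((∫ x in (0:ℝ)..X, (y x)^2)
        = - ∫ x in (0:ℝ)..X, Dy x *
            ((∫ t in (0:ℝ)..x, y t) - (1/X) * ∫ u in (0:ℝ)..X, (∫ t in (0:ℝ)..u, y t))) ∧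
      Real.sqrt (∫ x in (0:ℝ)..X, (y x)^2)
        ≤ C * Real.sqrt
            ((Real.sqrt (∫ x in (0:ℝ)..X, (y x)^2)
              + Real.sqrt (∫ x in (0:ℝ)..X, (Dy x)^2)) *
             Real.sqrt (∫ x in (0:ℝ)..X,
              ((∫ t in (0:ℝ)..x, y t) - (1/X) * ∫ u in (0:ℝ)..X, (∫ t in (0:ℝ)..u, y t))^2)) := by
  refine ⟨1, one_pos, fun y Dy hder hy0 hyX hy2 hDy2 => ?_⟩
  have hyc : ContinuousOn y (Icc 0 X) := fun x hx =>
    (hder x hx).continuousAt.continuousWithinAt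
  have huIcc : uIcc (0:ℝ) X = Icc 0 X := uIcc_of_le hX.le
  have hyInt : IntervalIntegrable y volume 0 X :=
    ContinuousOn.intervalIntegrable (by rwa [huIcc])
  have hFcont : ContinuousOn (fun x => ∫ t in (0:ℝ)..x, y t) (Icc 0 X) := by
    have := intervalIntegral.continuousOn_primitive_interval
      (a := (0:ℝ)) (b := X) (μ := volume) (f := y)
      (by rw [huIcc]; exact hyc.integrableOn_Icc)
    rwa [huIcc] at this
  have hFderiv : ∀ x ∈ Ioo (0:ℝ) X,
      HasDerivAt (fun x => ∫ t in (0:ℝ)..x, y t) (y x) x := by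
    intro x hx
    refine intervalIntegral.integral_hasDerivAt_right
      (hyInt.mono_set ?_) ⟨Icc 0 X, Icc_mem_nhds hx.1 hx.2,
        hyc.aestronglyMeasurable measurableSet_Icc⟩
      (hder x ⟨hx.1.le, hx.2.le⟩).continuousAt
    rw [huIcc, uIcc_of_le hx.1.le]
    exact Icc_subset_Icc le_rfl hx.2.le
  have h := stmt7_aux X hX y Dy
    (fun x => (∫ t in (0:ℝ)..x, y t) - (1/X) * ∫ u in (0:ℝ)..X, (∫ t in (0:ℝ)..u, y t))
    hder hy0 hyX hy2 hDy2
    (hFcont.sub continuousOn_const)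
    (fun x hx => (hFderiv x hx).sub_const _)
  rw [one_mul]
  exact h
end

section
/- Let Ω = (0,X) and let y ∈ H¹(Ω) (no boundary conditions, case m = 3). Then ∫_Ω y² dx = −∫_Ω (Dy)·(I⟨3⟩y) dx + X·⟨y⟩_Ω², where I⟨3⟩y = I(y − ⟨y⟩_Ω). Consequently ‖y‖_{L²(Ω)} ≤ C·‖y‖_{H¹(Ω)}^{1/2}·(‖I y‖_{L²(Ω)} + X|⟨y⟩_Ω|)^{1/2} for a constant C depending only on X. -/
open MeasureTheory Set

/-- Cauchy–Schwarz for real integrals. -/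
lemma my_cauchy_schwarz {μ : Measure ℝ} {f g : ℝ → ℝ}
    (hf : MemLp f 2 μ) (hg : MemLp g 2 μ) :
    |∫ x, f x * g x ∂μ| ≤ Real.sqrt (∫ x, (f x)^2 ∂μ) * Real.sqrt (∫ x, (g x)^2 ∂μ) := by
  have h2 : (2:ℝ).HolderConjugate 2 := Real.HolderConjugate.two_two
  have hf' : MemLp f (ENNReal.ofReal 2) μ := by simpa using hf
  have hg' : MemLp g (ENNReal.ofReal 2) μ := by simpa using hg
  have H := MeasureTheory.integral_mul_norm_le_Lp_mul_Lq h2 hf' hg'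
  have h1 : |∫ x, f x * g x ∂μ| ≤ ∫ x, ‖f x‖ * ‖g x‖ ∂μ := by
    calc |∫ x, f x * g x ∂μ| = ‖∫ x, f x * g x ∂μ‖ := (Real.norm_eq_abs _).symm
      _ ≤ ∫ x, ‖f x * g x‖ ∂μ := norm_integral_le_integral_norm _
      _ = ∫ x, ‖f x‖ * ‖g x‖ ∂μ := by
          refine integral_congr_ae (Filter.Eventually.of_forall fun x => ?_)
          simp [norm_mul]
  have hfe : (∫ x, ‖f x‖ ^ (2:ℝ) ∂μ) = ∫ x, (f x)^2 ∂μ := by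
    refine integral_congr_ae (Filter.Eventually.of_forall fun x => ?_)
    simp only []
    rw [show ‖f x‖ ^ (2:ℝ) = ‖f x‖ ^ (2:ℕ) by
      rw [← Real.rpow_natCast]; norm_num]
    simp [sq_abs]
  have hge : (∫ x, ‖g x‖ ^ (2:ℝ) ∂μ) = ∫ x, (g x)^2 ∂μ := by
    refine integral_congr_ae (Filter.Eventually.of_forall fun x => ?_)
    simp only []
    rw [show ‖g x‖ ^ (2:ℝ) = ‖g x‖ ^ (2:ℕ) by
      rw [← Real.rpow_natCast]; norm_num]
    simp [sq_abs]
  rw [hfe, hge] at H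
  rw [Real.sqrt_eq_rpow, Real.sqrt_eq_rpow]
  exact h1.trans H

lemma my_sqrt_add_le {p q : ℝ} (hp : 0 ≤ p) (hq : 0 ≤ q) :
    Real.sqrt (p + q) ≤ Real.sqrt p + Real.sqrt q := by
  rw [← Real.sqrt_sq (add_nonneg (Real.sqrt_nonneg p) (Real.sqrt_nonneg q))]
  apply Real.sqrt_le_sqrt
  nlinarith [Real.sq_sqrt hp, Real.sq_sqrt hq, Real.sqrt_nonneg p, Real.sqrt_nonneg q,
    mul_nonneg (Real.sqrt_nonneg p) (Real.sqrt_nonneg q)]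

lemma my_assemble {A a b c d s2 s3 t : ℝ}
    (ha : 0 ≤ a) (hb : 0 ≤ b) (hc : 0 ≤ c) (hd : 0 ≤ d)
    (hs2 : 0 ≤ s2) (hs3 : 0 ≤ s3) (ht : 0 < t)
    (h1 : A ≤ b * (s2 * c + s3 * d) + (a / t) * d) :
    A ≤ (s2 + s3 + 1/t) * ((a + b) * (c + d)) := by
  have hbase1 : b * c ≤ (a + b) * (c + d) := by nlinarith
  have hbase2 : b * d ≤ (a + b) * (c + d) := by nlinarith
  have hbase3 : a * d ≤ (a + b) * (c + d) := by nlinarith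
  have hinv0 : (0:ℝ) ≤ t⁻¹ := by positivity
  have k1 := mul_le_mul_of_nonneg_left hbase1 hs2
  have k2 := mul_le_mul_of_nonneg_left hbase2 hs3
  have k3 := mul_le_mul_of_nonneg_left hbase3 hinv0
  have he : b * (s2 * c + s3 * d) + (a / t) * d
      = s2 * (b * c) + s3 * (b * d) + t⁻¹ * (a * d) := by
    rw [div_eq_mul_inv]; ring
  rw [he] at h1
  have hexp : (s2 + s3 + 1/t) * ((a + b) * (c + d))
      = s2 * ((a + b) * (c + d)) + s3 * ((a + b) * (c + d)) + t⁻¹ * ((a + b) * (c + d)) := by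
    rw [one_div]; ring
  rw [hexp]
  linarith [k1, k2, k3]

set_option maxHeartbeats 1000000 in
/-- For y ∈ H¹(0,X) (no boundary conditions): ∫ y² = −∫ (Dy)(I⟨3⟩y) + X⟨y⟩² and the
multiplicative bound ‖y‖₂ ≤ C‖y‖_{H¹}^{1/2}(‖Iy‖₂ + X|⟨y⟩|)^{1/2}. -/
theorem stmt8 (X : ℝ) (hX : 0 < X) :
    ∃ C > 0, ∀ (y Dy : ℝ → ℝ),
      (∀ x ∈ Icc (0:ℝ) X, HasDerivAt y (Dy x) x) →
      IntegrableOn (fun x => (y x)^2) (Icc 0 X) →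
      IntegrableOn (fun x => (Dy x)^2) (Icc 0 X) →
      ((∫ x in (0:ℝ)..X, (y x)^2)
        = (- ∫ x in (0:ℝ)..X, Dy x *
             (∫ t in (0:ℝ)..x, (y t - (1/X) * ∫ u in (0:ℝ)..X, y u)))
          + X * ((1/X) * ∫ u in (0:ℝ)..X, y u)^2) ∧
      Real.sqrt (∫ x in (0:ℝ)..X, (y x)^2)
        ≤ C * Real.sqrt
            ((Real.sqrt (∫ x in (0:ℝ)..X, (y x)^2)
              + Real.sqrt (∫ x in (0:ℝ)..X, (Dy x)^2)) *
             (Real.sqrt (∫ x in (0:ℝ)..X, (∫ t in (0:ℝ)..x, y t)^2)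
              + X * |(1/X) * ∫ u in (0:ℝ)..X, y u|)) := by
  have hXs : 0 < Real.sqrt X := Real.sqrt_pos.2 hX
  set K : ℝ := Real.sqrt 2 + Real.sqrt (2 * X / 3) + 1 / Real.sqrt X with hK
  have hK0 : 0 < K := by positivity
  refine ⟨Real.sqrt K, Real.sqrt_pos.2 hK0, ?_⟩
  intro y Dy hy hy2 hDy2
  set m : ℝ := (1/X) * ∫ u in (0:ℝ)..X, y u with hm
  clear_value m
  have huIcc : uIcc (0:ℝ) X = Icc 0 X := uIcc_of_le hX.le
  have hycont : ContinuousOn y (Icc 0 X) :=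
    fun x hx => ((hy x hx).continuousAt).continuousWithinAt
  have hyint : IntervalIntegrable y volume 0 X := by
    apply ContinuousOn.intervalIntegrable; rwa [huIcc]
  have hfmcont : ContinuousOn (fun t => y t - m) (Icc 0 X) := hycont.sub continuousOn_const
  have hfmint : IntervalIntegrable (fun t => y t - m) volume 0 X :=
    hyint.sub intervalIntegrable_const
  set F : ℝ → ℝ := fun x => ∫ t in (0:ℝ)..x, (y t - m) with hFdef
  have hintyx : ∀ x ∈ Icc (0:ℝ) X, IntervalIntegrable (fun t => y t - m) volume 0 x := by
    intro x hx
    exact hfmint.mono_set (by rw [huIcc, uIcc_of_le hx.1]; exact Icc_subset_Icc le_rfl hx.2)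
  have hintyx' : ∀ x ∈ Icc (0:ℝ) X, IntervalIntegrable y volume 0 x := by
    intro x hx
    exact hyint.mono_set (by rw [huIcc, uIcc_of_le hx.1]; exact Icc_subset_Icc le_rfl hx.2)
  have hFcont : ContinuousOn F (Icc 0 X) := by
    rw [← huIcc]
    exact intervalIntegral.continuousOn_primitive_interval
      (by rw [huIcc]; exact hfmcont.integrableOn_Icc)
  have hGcont : ContinuousOn (fun x => ∫ t in (0:ℝ)..x, y t) (Icc 0 X) := by
    rw [← huIcc]
    exact intervalIntegral.continuousOn_primitive_interval
      (by rw [huIcc]; exact hycont.integrableOn_Icc)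
  -- measurability and integrability of Dy
  have hDyae : Dy =ᵐ[volume.restrict (Ioc 0 X)] deriv y := by
    filter_upwards [ae_restrict_mem measurableSet_Ioc] with x hx
    exact ((hy x (Ioc_subset_Icc_self hx)).deriv).symm
  have hDymeas : AEStronglyMeasurable Dy (volume.restrict (Ioc 0 X)) :=
    ((measurable_deriv y).aestronglyMeasurable).congr hDyae.symm
  have hDy2' : IntegrableOn (fun x => (Dy x)^2) (Ioc 0 X) := hDy2.mono_set Ioc_subset_Icc_self
  have hDyint : IntegrableOn Dy (Ioc 0 X) := by
    have hb : IntegrableOn (fun x => 1 + (Dy x)^2) (Ioc 0 X) :=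
      (integrableOn_const measure_Ioc_lt_top.ne).add hDy2'
    refine hb.integrable.mono' hDymeas ?_
    refine Filter.Eventually.of_forall fun x => ?_
    have h : |Dy x| ≤ 1 + (Dy x)^2 := by nlinarith [sq_nonneg (|Dy x| - 1), sq_abs (Dy x)]
    simpa [Real.norm_eq_abs] using h
  have hDyii : IntervalIntegrable Dy volume 0 X := by
    rw [intervalIntegrable_iff_integrableOn_Ioc_of_le hX.le]; exact hDyint
  -- integration by parts
  have hibp : ∫ x in (0:ℝ)..X, y x * (y x - m)
      = y X * F X - y 0 * F 0 - ∫ x in (0:ℝ)..X, Dy x * F x := by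
    apply intervalIntegral.integral_mul_deriv_eq_deriv_mul_of_hasDeriv_right
    · rwa [huIcc]
    · rwa [huIcc]
    · intro x hx
      rw [min_eq_left hX.le, max_eq_right hX.le] at hx
      exact (hy x (Ioo_subset_Icc_self hx)).hasDerivWithinAt
    · intro x hx
      rw [min_eq_left hX.le, max_eq_right hX.le] at hx
      have hcx : ContinuousWithinAt (fun t => y t - m) (Ioi x) x :=
        ((hy x (Ioo_subset_Icc_self hx)).continuousAt.sub continuousAt_const).continuousWithinAt
      have hmeas : StronglyMeasurableAtFilter (fun t => y t - m) (nhdsWithin x (Ioi x)) volume := by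
        refine ⟨Ioc x X, ?_, ?_⟩
        · exact Ioc_mem_nhdsGT_of_mem ⟨le_rfl, hx.2⟩
        · exact (hfmcont.mono (fun t ht => ⟨hx.1.le.trans ht.1.le, ht.2⟩)).aestronglyMeasurable
            measurableSet_Ioc
      have h := intervalIntegral.integral_hasDerivWithinAt_right
        (s := Ici x) (t := Ioi x) (hintyx x (Ioo_subset_Icc_self hx)) hmeas hcx
      exact h.mono Ioi_subset_Ici_self
    · exact hDyii
    · exact hfmint
  have hF0 : F 0 = 0 := intervalIntegral.integral_same
  have hintym : (∫ u in (0:ℝ)..X, y u) = X * m := by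
    rw [hm]; field_simp
  have hFX : F X = 0 := by
    show (∫ t in (0:ℝ)..X, (y t - m)) = 0
    rw [intervalIntegral.integral_sub hyint intervalIntegrable_const,
      intervalIntegral.integral_const, hintym]
    simp [smul_eq_mul]
  have hy2ii : IntervalIntegrable (fun x => (y x)^2) volume 0 X := by
    rw [intervalIntegrable_iff_integrableOn_Ioc_of_le hX.le]
    exact hy2.mono_set Ioc_subset_Icc_self
  have hlhs : ∫ x in (0:ℝ)..X, y x * (y x - m)
      = (∫ x in (0:ℝ)..X, (y x)^2) - X * m^2 := by
    have he : (fun x => y x * (y x - m)) = fun x => (y x)^2 - m * y x := by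
      funext x; ring
    rw [he, intervalIntegral.integral_sub hy2ii (hyint.const_mul m),
      intervalIntegral.integral_const_mul, hintym]
    ring
  have hpart1 : (∫ x in (0:ℝ)..X, (y x)^2)
      = (- ∫ x in (0:ℝ)..X, Dy x * F x) + X * m^2 := by
    rw [hlhs, hF0, hFX] at hibp
    linarith [hibp]
  refine ⟨hpart1, ?_⟩
  -- Part 2 : the inequality
  set A : ℝ := ∫ x in (0:ℝ)..X, (y x)^2 with hA
  set B : ℝ := ∫ x in (0:ℝ)..X, (Dy x)^2 with hB
  set Cg : ℝ := ∫ x in (0:ℝ)..X, (∫ t in (0:ℝ)..x, y t)^2 with hCg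
  have hA0 : 0 ≤ A := intervalIntegral.integral_nonneg hX.le (fun x _ => sq_nonneg _)
  have hB0 : 0 ≤ B := intervalIntegral.integral_nonneg hX.le (fun x _ => sq_nonneg _)
  have hCg0 : 0 ≤ Cg := intervalIntegral.integral_nonneg hX.le (fun x _ => sq_nonneg _)
  have hymeas : AEStronglyMeasurable y (volume.restrict (Ioc 0 X)) :=
    (hycont.mono Ioc_subset_Icc_self).aestronglyMeasurable measurableSet_Ioc
  have hyL2 : MemLp y 2 (volume.restrict (Ioc 0 X)) := (memLp_two_iff_integrable_sq hymeas).2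
    (hy2.mono_set Ioc_subset_Icc_self)
  have hDyL2 : MemLp Dy 2 (volume.restrict (Ioc 0 X)) :=
    (memLp_two_iff_integrable_sq hDymeas).2 hDy2'
  have hFmeas : AEStronglyMeasurable F (volume.restrict (Ioc 0 X)) :=
    (hFcont.mono Ioc_subset_Icc_self).aestronglyMeasurable measurableSet_Ioc
  have hF2int : IntegrableOn (fun x => (F x)^2) (Ioc 0 X) :=
    ((hFcont.pow 2).integrableOn_Icc).mono_set Ioc_subset_Icc_self
  have hFL2 : MemLp F 2 (volume.restrict (Ioc 0 X)) :=
    (memLp_two_iff_integrable_sq hFmeas).2 hF2int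
  have h1L2 : MemLp (fun _ : ℝ => (1:ℝ)) 2 (volume.restrict (Ioc 0 X)) := memLp_const 1
  -- Cauchy-Schwarz for Dy·F
  have hCS1 : |∫ x in (0:ℝ)..X, Dy x * F x|
      ≤ Real.sqrt B * Real.sqrt (∫ x in Ioc (0:ℝ) X, (F x)^2) := by
    have h := my_cauchy_schwarz hDyL2 hFL2
    rw [intervalIntegral.integral_of_le hX.le]
    have hBμ : B = ∫ x in Ioc (0:ℝ) X, (Dy x)^2 := by
      rw [hB, intervalIntegral.integral_of_le hX.le]
    rw [hBμ]
    exact h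
  -- Cauchy-Schwarz for y·1
  have hCS2 : |∫ u in (0:ℝ)..X, y u| ≤ Real.sqrt A * Real.sqrt X := by
    have h := my_cauchy_schwarz hyL2 h1L2
    have e1 : (∫ x in Ioc (0:ℝ) X, y x * 1) = ∫ u in (0:ℝ)..X, y u := by
      rw [intervalIntegral.integral_of_le hX.le]; simp
    have e2 : (∫ x in Ioc (0:ℝ) X, ((1:ℝ))^2) = X := by
      simp [Real.volume_Ioc, ENNReal.toReal_ofReal hX.le, hX.le]
    have e3 : A = ∫ x in Ioc (0:ℝ) X, (y x)^2 := by
      rw [hA, intervalIntegral.integral_of_le hX.le]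
    rw [e1, e2] at h
    rw [e3]
    exact h
  have hmabs : |m| ≤ Real.sqrt A / Real.sqrt X := by
    rw [hm, abs_mul, abs_of_pos (by positivity : (0:ℝ) < 1/X)]
    have hXX : X = Real.sqrt X * Real.sqrt X := (Real.mul_self_sqrt hX.le).symm
    calc 1/X * |∫ u in (0:ℝ)..X, y u| ≤ 1/X * (Real.sqrt A * Real.sqrt X) :=
          mul_le_mul_of_nonneg_left hCS2 (by positivity)
      _ = Real.sqrt A / Real.sqrt X := by
          rw [div_eq_mul_inv]; field_simp
          rw [Real.sq_sqrt hX.le, mul_comm]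
  -- F = G - x m on [0,X]
  have hFG : ∀ x ∈ Icc (0:ℝ) X, F x = (∫ t in (0:ℝ)..x, y t) - x * m := by
    intro x hx
    show (∫ t in (0:ℝ)..x, (y t - m)) = (∫ t in (0:ℝ)..x, y t) - x * m
    rw [intervalIntegral.integral_sub (hintyx' x hx) intervalIntegrable_const,
      intervalIntegral.integral_const]
    simp [smul_eq_mul]
  -- bound ∫ F²
  have hbint : IntervalIntegrable (fun x => 2 * (∫ t in (0:ℝ)..x, y t)^2 + 2 * m^2 * x^2)
      volume 0 X := by
    apply ContinuousOn.intervalIntegrable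
    rw [huIcc]
    exact (continuousOn_const.mul (hGcont.pow 2)).add
      (continuousOn_const.mul ((continuous_id.pow 2).continuousOn))
  have hF2ii : IntervalIntegrable (fun x => (F x)^2) volume 0 X := by
    apply ContinuousOn.intervalIntegrable; rw [huIcc]; exact hFcont.pow 2
  have hFbound : (∫ x in (0:ℝ)..X, (F x)^2) ≤ 2 * Cg + 2 * m^2 * (X^3/3) := by
    have h1 : (∫ x in (0:ℝ)..X, (F x)^2)
        ≤ ∫ x in (0:ℝ)..X, (2 * (∫ t in (0:ℝ)..x, y t)^2 + 2 * m^2 * x^2) := by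
      apply intervalIntegral.integral_mono_on hX.le hF2ii hbint
      intro x hx
      rw [hFG x hx]
      nlinarith [sq_nonneg ((∫ t in (0:ℝ)..x, y t) + x * m)]
    have hGii : IntervalIntegrable (fun x => (∫ t in (0:ℝ)..x, y t)^2) volume 0 X := by
      apply ContinuousOn.intervalIntegrable; rw [huIcc]; exact hGcont.pow 2
    have hxii : IntervalIntegrable (fun x : ℝ => x^2) volume 0 X :=
      (continuous_id.pow 2).intervalIntegrable 0 X
    have h2 : (∫ x in (0:ℝ)..X, (2 * (∫ t in (0:ℝ)..x, y t)^2 + 2 * m^2 * x^2))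
        = 2 * Cg + 2 * m^2 * (X^3/3) := by
      rw [intervalIntegral.integral_add (hGii.const_mul 2) (hxii.const_mul (2*m^2)),
        intervalIntegral.integral_const_mul, intervalIntegral.integral_const_mul,
        integral_pow]
      rw [hCg]
      norm_num
    linarith
  have hF2eq : (∫ x in Ioc (0:ℝ) X, (F x)^2) = ∫ x in (0:ℝ)..X, (F x)^2 :=
    (intervalIntegral.integral_of_le hX.le).symm
  have hsqF : Real.sqrt (∫ x in Ioc (0:ℝ) X, (F x)^2)
      ≤ Real.sqrt 2 * Real.sqrt Cg + Real.sqrt (2*X/3) * (X * |m|) := by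
    rw [hF2eq]
    calc Real.sqrt (∫ x in (0:ℝ)..X, (F x)^2)
        ≤ Real.sqrt (2 * Cg + 2 * m^2 * (X^3/3)) := Real.sqrt_le_sqrt hFbound
      _ ≤ Real.sqrt (2 * Cg) + Real.sqrt (2 * m^2 * (X^3/3)) :=
          my_sqrt_add_le (by positivity) (by positivity)
      _ = Real.sqrt 2 * Real.sqrt Cg + Real.sqrt (2*X/3) * (X * |m|) := by
          have he2 : Real.sqrt (2 * m^2 * (X^3/3)) = Real.sqrt (2*X/3) * (X * |m|) := by
            have habs : |m|^2 = m^2 := sq_abs m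
            have he : 2 * m^2 * (X^3/3) = (2*X/3) * (X * |m|)^2 := by
              rw [mul_pow, habs]; ring
            rw [he, Real.sqrt_mul (by positivity), Real.sqrt_sq (by positivity)]
          rw [Real.sqrt_mul (by norm_num) Cg, he2]
  have hXm2 : X * m^2 ≤ (Real.sqrt A / Real.sqrt X) * (X * |m|) := by
    have he : X * m^2 = |m| * (X * |m|) := by rw [← sq_abs]; ring
    rw [he]
    exact mul_le_mul_of_nonneg_right hmabs (by positivity)
  -- main estimate
  have ha0 : 0 ≤ Real.sqrt A := Real.sqrt_nonneg _
  have hb0 : 0 ≤ Real.sqrt B := Real.sqrt_nonneg _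
  have hc0 : 0 ≤ Real.sqrt Cg := Real.sqrt_nonneg _
  have hd0 : 0 ≤ X * |m| := by positivity
  have h1 : A ≤ |∫ x in (0:ℝ)..X, Dy x * F x| + X * m^2 := by
    rw [hpart1]
    exact add_le_add_left (neg_le_abs _) _
  have h2 : |∫ x in (0:ℝ)..X, Dy x * F x|
      ≤ Real.sqrt B * (Real.sqrt 2 * Real.sqrt Cg + Real.sqrt (2*X/3) * (X * |m|)) :=
    hCS1.trans (mul_le_mul_of_nonneg_left hsqF hb0)
  have h4 : A ≤ Real.sqrt B * (Real.sqrt 2 * Real.sqrt Cg + Real.sqrt (2*X/3) * (X * |m|))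
      + (Real.sqrt A / Real.sqrt X) * (X * |m|) :=
    h1.trans (add_le_add h2 hXm2)
  have hmain : A ≤ K * ((Real.sqrt A + Real.sqrt B) * (Real.sqrt Cg + X * |m|)) := by
    rw [hK]
    exact my_assemble ha0 hb0 hc0 hd0 (Real.sqrt_nonneg 2) (Real.sqrt_nonneg _) hXs h4
  rw [← Real.sqrt_mul hK0.le]
  exact Real.sqrt_le_sqrt hmain
end
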